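/- arXiv:2209.15116 — 3 statements merged into one kernel-verified Lean document; each statement's English description precedes it below -/
import Mathlib

section
/- Let S be a sub-semifield of 𝕋 (with S ≠ 𝔹), let A be an S-algebra with structure map ι : S → A, and let τ be any topology on A with the universal property with respect to ι, namely: (A, τ) is a topological semiring, ι is continuous (S carrying its canonical topology), and for every semiring homomorphism φ from A to a topological semiring B, φ is τ-continuous if and only if φ ∘ ι is continuous. Then for a prime congruence P on A the following are equivalent: (i) P ∈ Cont(A, τ); (ii) for all f, g ∈ A with (f,0) ∉ P and (g,0) ∉ P there exists b ∈ S^× with ι(b)·g <_P f. Moreover, when these hold, the composition S → A → A/P is injective, i.e., for b, b' ∈ S, ι(b) ≡_P ι(b') implies b = b'. -/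
/-- A totally ordered idempotent semifield, assumed different from the Boolean semifield `𝔹`. -/
class IdemTOSemifield (K : Type*) extends CommSemiring K, LinearOrder K where
  add_eq_max : ∀ a b : K, a + b = max a b
  exists_inv : ∀ a : K, a ≠ 0 → ∃ b : K, a * b = 1
  exists_nontrivial_unit : ∃ a : K, a ≠ 0 ∧ a ≠ 1

/-- The canonical topology on a totally ordered semifield. -/
def canonicalTopology (K : Type*) [IdemTOSemifield K] : TopologicalSpace K :=
  TopologicalSpace.generateFrom
    {s : Set K | (∃ a : K, a ≠ 0 ∧ s = {a}) ∨ (∃ a : K, a ≠ 0 ∧ s = Set.Iic a)}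

private theorem nnreal_mul_max (a b c : NNReal) : a * max b c = max (a * b) (a * c) := by
  rcases le_total b c with h | h
  · rw [max_eq_right h, max_eq_right (mul_le_mul_right h a)]
  · rw [max_eq_left h, max_eq_left (mul_le_mul_right h a)]

private theorem nnreal_max_mul (a b c : NNReal) : max a b * c = max (a * c) (b * c) := by
  rcases le_total a b with h | h
  · rw [max_eq_right h, max_eq_right (mul_le_mul_left h c)]
  · rw [max_eq_left h, max_eq_left (mul_le_mul_left h c)]

/-- The tropical semifield `𝕋`, modelled as `[0, ∞)` with addition `max` and the usual
multiplication. -/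
def Trop : Type := NNReal

namespace Trop

/-- Regard a nonnegative real as an element of `Trop`. -/
def mk (x : NNReal) : Trop := x

/-- The underlying nonnegative real of an element of `Trop`. -/
def toNNReal (x : Trop) : NNReal := x

noncomputable instance instLinearOrder : LinearOrder Trop :=
  inferInstanceAs (LinearOrder NNReal)

noncomputable instance instAdd : Add Trop := ⟨fun a b => max a b⟩
instance instZero : Zero Trop := inferInstanceAs (Zero NNReal)
instance instMul : Mul Trop := inferInstanceAs (Mul NNReal)
instance instOne : One Trop := inferInstanceAs (One NNReal)

noncomputable instance instCommSemiring : CommSemiring Trop where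
  __ := (inferInstance : CommMonoidWithZero NNReal)
  add a b := a + b
  nsmul := nsmulRec
  add_assoc a b c := max_assoc a b c
  zero_add a := max_eq_right (zero_le (a := toNNReal a))
  add_zero a := max_eq_left (zero_le (a := toNNReal a))
  add_comm a b := max_comm a b
  left_distrib a b c := by exact nnreal_mul_max a b c
  right_distrib a b c := by exact nnreal_max_mul a b c

noncomputable instance instIdemTOSemifield : IdemTOSemifield Trop where
  add_eq_max a b := rfl
  exists_inv a ha :=
    ⟨mk (toNNReal a)⁻¹, by exact mul_inv_cancel₀ (a := toNNReal a) (fun h => ha h)⟩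
  exists_nontrivial_unit :=
    ⟨mk 2, fun h => two_ne_zero (show (2 : NNReal) = 0 from h),
      fun h => by
        have : (2 : NNReal) = 1 := h
        norm_num at this⟩

end Trop

/-- `S` is (isomorphic to) a sub-semifield of the tropical semifield `𝕋` (and `S ≠ 𝔹`). -/
class TropSub (S : Type*) extends IdemTOSemifield S where
  emb : S →+* Trop
  emb_injective : Function.Injective emb

/-- A prime congruence on a commutative semiring: the congruence is proper and the quotient is
totally ordered with respect to the canonical order and cancellative. -/
structure IsPrimeCon {A : Type*} [CommSemiring A] (P : RingCon A) : Prop where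
  proper : ¬ P 0 1
  totalOrd : ∀ a b : A, P (a + b) a ∨ P (a + b) b
  cancel : ∀ a b c : A, ¬ P a 0 → P (a * b) (a * c) → P b c

/-- `x ≤_P y`: the image of `x` in `A/P` is at most that of `y` in the canonical order. -/
def leP {A : Type*} [CommSemiring A] (P : RingCon A) (x y : A) : Prop := P (x + y) y

/-- `x <_P y`: the image of `x` in `A/P` is strictly below that of `y`. -/
def ltP {A : Type*} [CommSemiring A] (P : RingCon A) (x y : A) : Prop := P (x + y) y ∧ ¬ P x y

/-- A prime congruence `P` on an `S`-algebra `A` (with structure map `ι`) is `S`-continuous: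
for all `f, g` not in the ideal-kernel of `P` there is a nonzero `b ∈ S` with `ι b * g <_P f`. -/
def SCont {S A : Type*} [CommSemiring S] [CommSemiring A] (ι : S →+* A) (P : RingCon A) : Prop :=
  ∀ f g : A, ¬ P f 0 → ¬ P g 0 → ∃ b : S, b ≠ 0 ∧ ltP P (ι b * g) f

universe u

/-- A witness that the prime congruence `P` belongs to `Cont A`: a continuous homomorphism to a
totally ordered semifield (with its canonical topology) whose congruence kernel is `P` and whose
image contains an element other than `0` and `1`. -/
structure ContWitness {A : Type u} [CommSemiring A] (τ : TopologicalSpace A) (P : RingCon A) :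
    Type (u + 1) where
  K : Type u
  [instK : IdemTOSemifield K]
  v : A →+* K
  cont : @Continuous A K τ (canonicalTopology K) v
  ker : ∀ f g : A, P f g ↔ v f = v g
  nontrivialImage : ∃ x : K, x ∈ Set.range ⇑v ∧ x ≠ 0 ∧ x ≠ 1

/-- `P ∈ Cont A` for a topological semiring `(A, τ)`. -/
def InCont {A : Type u} [CommSemiring A] (τ : TopologicalSpace A) (P : RingCon A) : Prop :=
  Nonempty (ContWitness τ P)

/-! ### Auxiliary lemmas for totally ordered idempotent semifields -/

section IdemLemmas

variable {K : Type*} [IdemTOSemifield K]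

theorem IdemTO.le_iff {a b : K} : a ≤ b ↔ a + b = b := by
  rw [IdemTOSemifield.add_eq_max]
  exact ⟨fun h => max_eq_right h, fun h => by rw [← h]; exact le_max_left a b⟩

theorem IdemTO.zero_le' (a : K) : (0 : K) ≤ a := IdemTO.le_iff.mpr (zero_add a)

theorem IdemTO.zero_ne_one' : (0 : K) ≠ 1 := by
  obtain ⟨a, ha0, -⟩ := IdemTOSemifield.exists_nontrivial_unit (K := K)
  intro h
  exact ha0 (by rw [← mul_one a, ← h, mul_zero])

theorem IdemTO.mul_le_mul {a b : K} (c : K) (h : a ≤ b) : c * a ≤ c * b := by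
  rw [IdemTO.le_iff] at h ⊢
  rw [← mul_add, h]

theorem IdemTO.mul_le_mul_right {a b : K} (c : K) (h : a ≤ b) : a * c ≤ b * c := by
  rw [mul_comm a c, mul_comm b c]; exact IdemTO.mul_le_mul c h

theorem IdemTO.mul_cancel {a : K} (ha : a ≠ 0) {b c : K} (h : a * b = a * c) : b = c := by
  obtain ⟨d, hd⟩ := IdemTOSemifield.exists_inv a ha
  have hda : d * a = 1 := by rw [mul_comm]; exact hd
  calc b = d * a * b := by rw [hda, one_mul]
    _ = d * a * c := by rw [mul_assoc, h, ← mul_assoc]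
    _ = c := by rw [hda, one_mul]

theorem IdemTO.mul_ne_zero' {a b : K} (ha : a ≠ 0) (hb : b ≠ 0) : a * b ≠ 0 := by
  obtain ⟨a', ha'⟩ := IdemTOSemifield.exists_inv a ha
  obtain ⟨b', hb'⟩ := IdemTOSemifield.exists_inv b hb
  intro h
  apply IdemTO.zero_ne_one' (K := K)
  calc (0 : K) = 0 * (a' * b') := (zero_mul _).symm
    _ = a * b * (a' * b') := by rw [h]
    _ = (a * a') * (b * b') := by ring
    _ = 1 := by rw [ha', hb', one_mul]

theorem IdemTO.exists_lt_one : ∃ u : K, u ≠ 0 ∧ u < 1 := by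
  obtain ⟨a, ha0, ha1⟩ := IdemTOSemifield.exists_nontrivial_unit (K := K)
  rcases lt_or_gt_of_ne ha1 with h | h
  · exact ⟨a, ha0, h⟩
  · obtain ⟨b, hb⟩ := IdemTOSemifield.exists_inv a ha0
    have hb0 : b ≠ 0 := by
      rintro rfl; rw [mul_zero] at hb; exact IdemTO.zero_ne_one' hb
    refine ⟨b, hb0, ?_⟩
    by_contra hle
    push_neg at hle
    have h2 : a * 1 ≤ a * b := IdemTO.mul_le_mul a hle
    rw [mul_one, hb] at h2
    exact absurd h (not_lt.mpr h2)

theorem IdemTO.hom_mono {L : Type*} [IdemTOSemifield L] (ψ : L →+* K) : Monotone ψ :=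
  fun _ _ h => IdemTO.le_iff.mpr (by rw [← map_add, IdemTO.le_iff.mp h])

/-! ### The canonical topology -/

theorem IdemTO.isOpen_singleton {a : K} (ha : a ≠ 0) :
    @IsOpen K (canonicalTopology K) {a} :=
  TopologicalSpace.isOpen_generateFrom_of_mem (Or.inl ⟨a, ha, rfl⟩)

theorem IdemTO.isOpen_Iic' {a : K} (ha : a ≠ 0) :
    @IsOpen K (canonicalTopology K) (Set.Iic a) :=
  TopologicalSpace.isOpen_generateFrom_of_mem (Or.inr ⟨a, ha, rfl⟩)

theorem IdemTO.continuousAdd : @ContinuousAdd K (canonicalTopology K) _ := by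
  letI := canonicalTopology K
  refine ⟨continuous_generateFrom_iff.mpr ?_⟩
  rintro s (⟨a, ha, rfl⟩ | ⟨a, ha, rfl⟩)
  · have he : (fun p : K × K => p.1 + p.2) ⁻¹' {a}
        = ({a} ×ˢ Set.Iic a) ∪ (Set.Iic a ×ˢ {a}) := by
      ext ⟨x, y⟩
      simp only [Set.mem_preimage, Set.mem_singleton_iff, Set.mem_union, Set.mem_prod,
        Set.mem_Iic, IdemTOSemifield.add_eq_max]
      constructor
      · intro h
        rcases max_eq_iff.mp h with ⟨h1, h2⟩ | ⟨h1, h2⟩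
        · exact Or.inl ⟨h1, le_trans h2 (le_of_eq h1)⟩
        · exact Or.inr ⟨le_trans h2 (le_of_eq h1), h1⟩
      · rintro (⟨rfl, h⟩ | ⟨h, rfl⟩)
        · exact max_eq_left h
        · exact max_eq_right h
    rw [he]
    exact ((IdemTO.isOpen_singleton ha).prod (IdemTO.isOpen_Iic' ha)).union
      ((IdemTO.isOpen_Iic' ha).prod (IdemTO.isOpen_singleton ha))
  · have he : (fun p : K × K => p.1 + p.2) ⁻¹' (Set.Iic a) = Set.Iic a ×ˢ Set.Iic a := by
      ext ⟨x, y⟩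
      simp only [Set.mem_preimage, Set.mem_Iic, Set.mem_prod,
        IdemTOSemifield.add_eq_max, max_le_iff]
    rw [he]
    exact (IdemTO.isOpen_Iic' ha).prod (IdemTO.isOpen_Iic' ha)

theorem IdemTO.continuousMul : @ContinuousMul K (canonicalTopology K) _ := by
  letI := canonicalTopology K
  refine ⟨continuous_generateFrom_iff.mpr ?_⟩
  rintro s (⟨a, ha, rfl⟩ | ⟨a, ha, rfl⟩) <;> rw [isOpen_iff_forall_mem_open]
  · rintro ⟨x, y⟩ hxy
    simp only [Set.mem_preimage, Set.mem_singleton_iff] at hxy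
    have hx : x ≠ 0 := by rintro rfl; rw [zero_mul] at hxy; exact ha hxy.symm
    have hy : y ≠ 0 := by rintro rfl; rw [mul_zero] at hxy; exact ha hxy.symm
    refine ⟨{x} ×ˢ {y}, ?_, (IdemTO.isOpen_singleton hx).prod (IdemTO.isOpen_singleton hy),
      ⟨rfl, rfl⟩⟩
    rintro ⟨x', y'⟩ ⟨hx', hy'⟩
    simp only [Set.mem_singleton_iff] at hx' hy'
    simp only [Set.mem_preimage, Set.mem_singleton_iff]
    rw [hx', hy']
    exact hxy
  · rintro ⟨x, y⟩ hxy
    simp only [Set.mem_preimage, Set.mem_Iic] at hxy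
    by_cases hx : x = 0
    · by_cases hy : y = 0
      · subst hx; subst hy
        refine ⟨Set.Iic a ×ˢ Set.Iic 1, ?_,
          (IdemTO.isOpen_Iic' ha).prod
            (IdemTO.isOpen_Iic' (fun h => IdemTO.zero_ne_one' (K := K) h.symm)),
          IdemTO.zero_le' a, IdemTO.zero_le' 1⟩
        rintro ⟨x', y'⟩ ⟨h1, h2⟩
        simp only [Set.mem_Iic] at h1 h2
        simp only [Set.mem_preimage, Set.mem_Iic]
        calc x' * y' ≤ x' * 1 := IdemTO.mul_le_mul x' h2
          _ = x' := mul_one x'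
          _ ≤ a := h1
      · subst hx
        obtain ⟨y', hy'⟩ := IdemTOSemifield.exists_inv y hy
        have hy'0 : y' ≠ 0 := by
          rintro rfl; rw [mul_zero] at hy'; exact IdemTO.zero_ne_one' hy'
        refine ⟨Set.Iic (a * y') ×ˢ {y}, ?_,
          (IdemTO.isOpen_Iic' (IdemTO.mul_ne_zero' ha hy'0)).prod (IdemTO.isOpen_singleton hy),
          IdemTO.zero_le' _, rfl⟩
        rintro ⟨x'', y''⟩ ⟨h1, h2⟩
        simp only [Set.mem_Iic] at h1
        simp only [Set.mem_singleton_iff] at h2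
        simp only [Set.mem_preimage, Set.mem_Iic]
        rw [h2]
        calc x'' * y ≤ (a * y') * y := IdemTO.mul_le_mul_right y h1
          _ = a * (y * y') := by ring
          _ = a := by rw [hy', mul_one]
    · by_cases hy : y = 0
      · subst hy
        obtain ⟨x', hx'⟩ := IdemTOSemifield.exists_inv x hx
        have hx'0 : x' ≠ 0 := by
          rintro rfl; rw [mul_zero] at hx'; exact IdemTO.zero_ne_one' hx'
        refine ⟨{x} ×ˢ Set.Iic (a * x'), ?_,
          (IdemTO.isOpen_singleton hx).prod (IdemTO.isOpen_Iic' (IdemTO.mul_ne_zero' ha hx'0)),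
          rfl, IdemTO.zero_le' _⟩
        rintro ⟨x'', y''⟩ ⟨h1, h2⟩
        simp only [Set.mem_singleton_iff] at h1
        simp only [Set.mem_Iic] at h2
        simp only [Set.mem_preimage, Set.mem_Iic]
        rw [h1]
        calc x * y'' ≤ x * (a * x') := IdemTO.mul_le_mul x h2
          _ = a * (x * x') := by ring
          _ = a := by rw [hx', mul_one]
      · refine ⟨{x} ×ˢ {y}, ?_, (IdemTO.isOpen_singleton hx).prod (IdemTO.isOpen_singleton hy),
          rfl, rfl⟩
        rintro ⟨x', y'⟩ ⟨h1, h2⟩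
        simp only [Set.mem_singleton_iff] at h1 h2
        simp only [Set.mem_preimage, Set.mem_Iic]
        rw [h1, h2]
        exact hxy

theorem IdemTO.open_zero {U : Set K} (hU : @IsOpen K (canonicalTopology K) U) (h0 : (0 : K) ∈ U) :
    ∃ b : K, b ≠ 0 ∧ Set.Iic b ⊆ U := by
  have hU' : TopologicalSpace.GenerateOpen
      {s : Set K | (∃ a : K, a ≠ 0 ∧ s = {a}) ∨ (∃ a : K, a ≠ 0 ∧ s = Set.Iic a)} U := hU
  clear hU
  revert h0
  induction hU' with
  | basic s hs =>
    intro h0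
    rcases hs with ⟨a, ha, rfl⟩ | ⟨a, ha, rfl⟩
    · rw [Set.mem_singleton_iff] at h0
      exact absurd h0.symm ha
    · exact ⟨a, ha, subset_rfl⟩
  | univ =>
    intro _
    obtain ⟨a, ha, -⟩ := IdemTOSemifield.exists_nontrivial_unit (K := K)
    exact ⟨a, ha, Set.subset_univ _⟩
  | inter s t _ _ ihs iht =>
    intro h0
    obtain ⟨b, hb, hbs⟩ := ihs h0.1
    obtain ⟨c, hc, hct⟩ := iht h0.2
    rcases le_total b c with h | h
    · exact ⟨b, hb, fun x hx =>
        ⟨hbs hx, hct (Set.mem_Iic.mpr (le_trans (Set.mem_Iic.mp hx) h))⟩⟩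
    · exact ⟨c, hc, fun x hx =>
        ⟨hbs (Set.mem_Iic.mpr (le_trans (Set.mem_Iic.mp hx) h)), hct hx⟩⟩
  | sUnion S hS ih =>
    intro h0
    obtain ⟨s, hs, h0s⟩ := h0
    obtain ⟨b, hb, hbs⟩ := ih s hs h0s
    exact ⟨b, hb, fun x hx => ⟨s, hs, hbs hx⟩⟩

theorem IdemTO.crit_of_continuous {L : Type*} [IdemTOSemifield L] {f : L → K}
    (hf0 : f 0 = 0)
    (hc : @Continuous L K (canonicalTopology L) (canonicalTopology K) f) :
    ∀ a : K, a ≠ 0 → ∃ b : L, b ≠ 0 ∧ f b ≤ a := by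
  intro a ha
  letI := canonicalTopology L
  letI := canonicalTopology K
  have hop : IsOpen (f ⁻¹' Set.Iic a) := (IdemTO.isOpen_Iic' ha).preimage hc
  have h0 : (0 : L) ∈ f ⁻¹' Set.Iic a := by
    simp only [Set.mem_preimage, Set.mem_Iic, hf0]
    exact IdemTO.zero_le' a
  obtain ⟨b, hb, hsub⟩ := IdemTO.open_zero hop h0
  exact ⟨b, hb, Set.mem_Iic.mp (hsub (Set.mem_Iic.mpr le_rfl))⟩

theorem IdemTO.continuous_of_crit {L : Type*} [IdemTOSemifield L] {f : L → K}
    (hf0 : f 0 = 0) (hmono : Monotone f)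
    (hcrit : ∀ a : K, a ≠ 0 → ∃ b : L, b ≠ 0 ∧ f b ≤ a) :
    @Continuous L K (canonicalTopology L) (canonicalTopology K) f := by
  letI := canonicalTopology L
  letI := canonicalTopology K
  refine continuous_generateFrom_iff.mpr ?_
  rintro s (⟨a, ha, rfl⟩ | ⟨a, ha, rfl⟩) <;> rw [isOpen_iff_forall_mem_open]
  · intro x hx
    have hx0 : x ≠ 0 := by
      rintro rfl
      rw [Set.mem_preimage, Set.mem_singleton_iff, hf0] at hx
      exact ha hx.symm
    refine ⟨{x}, ?_, IdemTO.isOpen_singleton hx0, rfl⟩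
    intro y hy
    rw [Set.mem_singleton_iff] at hy
    rw [hy]
    exact hx
  · intro x hx
    by_cases hx0 : x = 0
    · subst hx0
      obtain ⟨b, hb, hfb⟩ := hcrit a ha
      refine ⟨Set.Iic b, ?_, IdemTO.isOpen_Iic' hb, IdemTO.zero_le' b⟩
      intro y hy
      exact Set.mem_preimage.mpr (Set.mem_Iic.mpr (le_trans (hmono (Set.mem_Iic.mp hy)) hfb))
    · refine ⟨{x}, ?_, IdemTO.isOpen_singleton hx0, rfl⟩
      intro y hy
      rw [Set.mem_singleton_iff] at hy
      rw [hy]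
      exact hx

end IdemLemmas

/-! ### Archimedean property of sub-semifields of `𝕋` -/

theorem Trop.toNNReal_pow (a : Trop) (n : ℕ) :
    Trop.toNNReal (a ^ n) = (Trop.toNNReal a) ^ n := by
  induction n with
  | zero => rw [pow_zero, pow_zero]; rfl
  | succ n ih => rw [pow_succ, pow_succ, ← ih]; rfl

theorem TropSub.arch {S : Type*} [TropSub S] {c d : S} (hc : 1 < c) (hd : d ≠ 0) :
    ∃ n : ℕ, 1 ≤ d * c ^ n := by
  obtain ⟨d', hd'⟩ := IdemTOSemifield.exists_inv d hd
  have hmono : Monotone (TropSub.emb (S := S)) := IdemTO.hom_mono _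
  have hsm : StrictMono (TropSub.emb (S := S)) :=
    hmono.strictMono_of_injective TropSub.emb_injective
  have h1c : (1 : NNReal) < Trop.toNNReal (TropSub.emb (S := S) c) := by
    have h := hsm hc
    rw [map_one] at h
    exact h
  obtain ⟨n, hn⟩ := pow_unbounded_of_one_lt
    (Trop.toNNReal (TropSub.emb (S := S) d')) h1c
  refine ⟨n, ?_⟩
  have h2 : TropSub.emb (S := S) d' ≤ TropSub.emb (S := S) (c ^ n) := by
    rw [map_pow]
    have h5 : Trop.toNNReal (TropSub.emb (S := S) d')
        ≤ Trop.toNNReal ((TropSub.emb (S := S) c) ^ n) := by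
      rw [Trop.toNNReal_pow]
      exact le_of_lt hn
    exact h5
  have h3 : d' ≤ c ^ n := hsm.le_iff_le.mp h2
  have h4 := IdemTO.mul_le_mul d h3
  rw [hd'] at h4
  exact h4

/-! ### The residue semifield of a prime congruence -/

section KConstruction

universe v
variable {A : Type v} [CommSemiring A]

theorem P_of_eq (P : RingCon A) {x y : A} (h : x = y) : P x y := by
  rw [h]
  exact P.refl y

theorem Pre (P : RingCon A) {x x' y y' : A} (hx : x = x') (hy : y = y')
    (h : P x' y') : P x y := by
  rw [hx, hy]; exact h

theorem knz (P : RingCon A) (hP : IsPrimeCon P) {g g' : A}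
    (hg : ¬ P g 0) (hg' : ¬ P g' 0) : ¬ P (g * g') 0 := by
  intro h
  exact hg' (hP.cancel g g' 0 hg (Pre P rfl (mul_zero g) h))

theorem kone (P : RingCon A) (hP : IsPrimeCon P) : ¬ P (1 : A) 0 :=
  fun h => hP.proper (P.symm h)

def kSetoid (P : RingCon A) (hP : IsPrimeCon P) : Setoid (A × {g : A // ¬ P g 0}) where
  r x y := P (x.1 * y.2.1) (y.1 * x.2.1)
  iseqv := by
    constructor
    · exact fun x => P.refl _
    · exact fun h => P.symm h
    · rintro ⟨f, g, hg⟩ ⟨f', g', hg'⟩ ⟨f'', g'', hg''⟩ h1 h2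
      refine hP.cancel g' _ _ hg' ?_
      have t1 : P (f * g' * g'') (f' * g * g'') := P.mul h1 (P.refl g'')
      have t2 : P (f' * g * g'') (f'' * g' * g) := Pre P (by ring) rfl (P.mul h2 (P.refl g))
      exact Pre P (by ring) (by ring) (P.trans t1 t2)

def KQ (P : RingCon A) (hP : IsPrimeCon P) (_hnt : ∃ a : A, ¬ P a 0 ∧ ¬ P a 1) : Type v :=
  Quotient (kSetoid P hP)

variable (P : RingCon A) (hP : IsPrimeCon P) (hnt : ∃ a : A, ¬ P a 0 ∧ ¬ P a 1)

def kmk (f g : A) (hg : ¬ P g 0) : KQ P hP hnt :=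
  Quotient.mk (kSetoid P hP) (f, ⟨g, hg⟩)

theorem kmk_eq {f g f' g' : A} {hg : ¬ P g 0} {hg' : ¬ P g' 0} :
    kmk P hP hnt f g hg = kmk P hP hnt f' g' hg' ↔ P (f * g') (f' * g) :=
  ⟨fun h => Quotient.exact (s := kSetoid P hP) (a := (f, ⟨g, hg⟩)) (b := (f', ⟨g', hg'⟩)) h,
   fun h => Quotient.sound h⟩

def kAdd : KQ P hP hnt → KQ P hP hnt → KQ P hP hnt := fun x y =>
  Quotient.liftOn₂ x y
    (fun a b => kmk P hP hnt (a.1 * b.2.1 + b.1 * a.2.1) (a.2.1 * b.2.1)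
      (knz P hP a.2.2 b.2.2))
    (by
      rintro ⟨f, g, hg⟩ ⟨f', g', hg'⟩ ⟨f₂, g₂, hg₂⟩ ⟨f₂', g₂', hg₂'⟩ h h'
      refine (kmk_eq P hP hnt).mpr ?_
      exact Pre P (by ring) (by ring)
        (P.add (P.mul h (P.refl (g' * g₂'))) (P.mul h' (P.refl (g * g₂)))))

def kMul : KQ P hP hnt → KQ P hP hnt → KQ P hP hnt := fun x y =>
  Quotient.liftOn₂ x y
    (fun a b => kmk P hP hnt (a.1 * b.1) (a.2.1 * b.2.1) (knz P hP a.2.2 b.2.2))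
    (by
      rintro ⟨f, g, hg⟩ ⟨f', g', hg'⟩ ⟨f₂, g₂, hg₂⟩ ⟨f₂', g₂', hg₂'⟩ h h'
      refine (kmk_eq P hP hnt).mpr ?_
      exact Pre P (by ring) (by ring) (P.mul h h'))

theorem kAdd_assoc (x y z : KQ P hP hnt) :
    kAdd P hP hnt (kAdd P hP hnt x y) z = kAdd P hP hnt x (kAdd P hP hnt y z) := by
  rcases x with ⟨⟨f, g, hg⟩⟩; rcases y with ⟨⟨f', g', hg'⟩⟩; rcases z with ⟨⟨f'', g'', hg''⟩⟩
  exact (kmk_eq P hP hnt).mpr (P_of_eq P (by ring))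

theorem kAdd_comm (x y : KQ P hP hnt) : kAdd P hP hnt x y = kAdd P hP hnt y x := by
  rcases x with ⟨⟨f, g, hg⟩⟩; rcases y with ⟨⟨f', g', hg'⟩⟩
  exact (kmk_eq P hP hnt).mpr (P_of_eq P (by ring))

noncomputable def kLO : LinearOrder (KQ P hP hnt) where
  le x y := kAdd P hP hnt x y = y
  le_refl x := by
    rcases x with ⟨⟨f, g, hg⟩⟩
    refine (kmk_eq P hP hnt).mpr ?_
    have h : P (f * g + f * g) (f * g) := (hP.totalOrd (f * g) (f * g)).elim id id
    exact Pre P rfl (by ring) (P.mul h (P.refl g))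
  le_trans a b c h1 h2 := by
    show kAdd P hP hnt a c = c
    calc kAdd P hP hnt a c = kAdd P hP hnt a (kAdd P hP hnt b c) := by rw [h2]
      _ = kAdd P hP hnt (kAdd P hP hnt a b) c := (kAdd_assoc P hP hnt a b c).symm
      _ = kAdd P hP hnt b c := by rw [h1]
      _ = c := h2
  le_antisymm a b h1 h2 := by
    calc a = kAdd P hP hnt b a := h2.symm
      _ = kAdd P hP hnt a b := kAdd_comm P hP hnt b a
      _ = b := h1
  le_total x y := by
    rcases x with ⟨⟨f, g, hg⟩⟩; rcases y with ⟨⟨f', g', hg'⟩⟩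
    rcases hP.totalOrd (f * g') (f' * g) with h | h
    · refine Or.inr ?_
      show kAdd P hP hnt _ _ = _
      refine (kmk_eq P hP hnt).mpr ?_
      exact Pre P (by ring) (by ring) (P.mul h (P.refl g))
    · refine Or.inl ?_
      show kAdd P hP hnt _ _ = _
      refine (kmk_eq P hP hnt).mpr ?_
      exact Pre P rfl (by ring) (P.mul h (P.refl g'))
  toDecidableLE _ _ := Classical.propDecidable _

instance kZeroI : Zero (KQ P hP hnt) := ⟨kmk P hP hnt 0 1 (kone P hP)⟩
instance kOneI : One (KQ P hP hnt) := ⟨kmk P hP hnt 1 1 (kone P hP)⟩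
instance kAddI : Add (KQ P hP hnt) := ⟨kAdd P hP hnt⟩
instance kMulI : Mul (KQ P hP hnt) := ⟨kMul P hP hnt⟩

include hnt in
theorem kNontriv : ∃ x : KQ P hP hnt,
    x ≠ kmk P hP hnt 0 1 (kone P hP) ∧ x ≠ kmk P hP hnt 1 1 (kone P hP) := by
  have h2 := hnt
  obtain ⟨a, ha0, ha1⟩ := h2
  refine ⟨kmk P hP hnt a 1 (kone P hP), ?_, ?_⟩
  · intro h
    exact ha0 (Pre P (mul_one a).symm (zero_mul (1 : A)).symm ((kmk_eq P hP hnt).mp h))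
  · intro h
    exact ha1 (Pre P (mul_one a).symm (one_mul (1 : A)).symm ((kmk_eq P hP hnt).mp h))

def kCS : CommSemiring (KQ P hP hnt) where
  nsmul := nsmulRec
  npow := npowRec
  add := kAdd P hP hnt
  add_assoc := kAdd_assoc P hP hnt
  add_comm := kAdd_comm P hP hnt
  zero := kmk P hP hnt 0 1 (kone P hP)
  zero_add x := by
    rcases x with ⟨⟨f, g, hg⟩⟩
    exact (kmk_eq P hP hnt).mpr (P_of_eq P (by ring))
  add_zero x := by
    rcases x with ⟨⟨f, g, hg⟩⟩
    exact (kmk_eq P hP hnt).mpr (P_of_eq P (by ring))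
  mul := kMul P hP hnt
  mul_assoc x y z := by
    rcases x with ⟨⟨f, g, hg⟩⟩; rcases y with ⟨⟨f', g', hg'⟩⟩; rcases z with ⟨⟨f'', g'', hg''⟩⟩
    exact (kmk_eq P hP hnt).mpr (P_of_eq P (by ring))
  mul_comm x y := by
    rcases x with ⟨⟨f, g, hg⟩⟩; rcases y with ⟨⟨f', g', hg'⟩⟩
    exact (kmk_eq P hP hnt).mpr (P_of_eq P (by ring))
  one := kmk P hP hnt 1 1 (kone P hP)
  one_mul x := by
    rcases x with ⟨⟨f, g, hg⟩⟩
    exact (kmk_eq P hP hnt).mpr (P_of_eq P (by ring))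
  mul_one x := by
    rcases x with ⟨⟨f, g, hg⟩⟩
    exact (kmk_eq P hP hnt).mpr (P_of_eq P (by ring))
  zero_mul x := by
    rcases x with ⟨⟨f, g, hg⟩⟩
    exact (kmk_eq P hP hnt).mpr (P_of_eq P (by ring))
  mul_zero x := by
    rcases x with ⟨⟨f, g, hg⟩⟩
    exact (kmk_eq P hP hnt).mpr (P_of_eq P (by ring))
  left_distrib x y z := by
    rcases x with ⟨⟨f, g, hg⟩⟩; rcases y with ⟨⟨f', g', hg'⟩⟩; rcases z with ⟨⟨f'', g'', hg''⟩⟩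
    exact (kmk_eq P hP hnt).mpr (P_of_eq P (by ring))
  right_distrib x y z := by
    rcases x with ⟨⟨f, g, hg⟩⟩; rcases y with ⟨⟨f', g', hg'⟩⟩; rcases z with ⟨⟨f'', g'', hg''⟩⟩
    exact (kmk_eq P hP hnt).mpr (P_of_eq P (by ring))

theorem kAdd_eq_max (a b : KQ P hP hnt) :
    kAdd P hP hnt a b = @max _ (kLO P hP hnt).toMax a b := by
  letI := kLO P hP hnt
  rcases le_total a b with h | h
  · rw [max_eq_right h]
    exact h
  · rw [max_eq_left h]
    rw [kAdd_comm]
    exact h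

theorem kInv : ∀ a : KQ P hP hnt, a ≠ kmk P hP hnt 0 1 (kone P hP) →
    ∃ b, kMul P hP hnt a b = kmk P hP hnt 1 1 (kone P hP) := by
  rintro ⟨⟨f, g, hg⟩⟩ ha
  have hf : ¬ P f 0 := by
    intro h
    exact ha ((kmk_eq P hP hnt).mpr (Pre P (mul_one f) (zero_mul g) h))
  exact ⟨kmk P hP hnt g f hf, (kmk_eq P hP hnt).mpr (P_of_eq P (by ring))⟩

noncomputable instance kField : IdemTOSemifield (KQ P hP hnt) :=
  { kCS P hP hnt, kLO P hP hnt with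
    add_eq_max := kAdd_eq_max P hP hnt
    exists_inv := kInv P hP hnt
    exists_nontrivial_unit := kNontriv P hP hnt }

def kHom : A →+* KQ P hP hnt where
  toFun f := kmk P hP hnt f 1 (kone P hP)
  map_one' := rfl
  map_mul' f g := by
    refine ((kmk_eq P hP hnt).mpr ?_)
    exact P_of_eq P (by ring)
  map_zero' := rfl
  map_add' f g := by
    refine ((kmk_eq P hP hnt).mpr ?_)
    exact P_of_eq P (by ring)

theorem kHom_ker {f g : A} : P f g ↔ kHom P hP hnt f = kHom P hP hnt g :=
  ⟨fun h => (kmk_eq P hP hnt).mpr (Pre P (mul_one f) (mul_one g) h),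
   fun h => Pre P (mul_one f).symm (mul_one g).symm ((kmk_eq P hP hnt).mp h)⟩

theorem kHom_le_mk {h f g : A} {hg : ¬ P g 0} (hle : P (h * g + f) f) :
    kHom P hP hnt h ≤ kmk P hP hnt f g hg := by
  show kAdd P hP hnt _ _ = _
  refine (kmk_eq P hP hnt).mpr ?_
  exact Pre P (by ring) (by ring) (P.mul hle (P.refl g))

end KConstruction

/-! ### Continuity criterion from a witness -/

theorem witness_crit {S : Type*} [TropSub S] {K : Type*} [IdemTOSemifield K]
    {A : Type*} [CommSemiring A] (ι : S →+* A) (v : A →+* K) (τ : TopologicalSpace A)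
    (hcont : @Continuous A K τ (canonicalTopology K) v)
    (huniv : @Continuous A K τ (canonicalTopology K) v ↔
        @Continuous S K (canonicalTopology S) (canonicalTopology K) fun s => v (ι s))
    {a : K} (ha : a ≠ 0) : ∃ b : S, b ≠ 0 ∧ v (ι b) ≤ a := by
  have hc := huniv.mp hcont
  refine IdemTO.crit_of_continuous ?_ hc a ha
  rw [map_zero, map_zero]
/-!
Statement 8: if `τ` is a topology on an `S`-algebra `A` with the universal property with respect
to the structure map `ι : S → A`, then a prime congruence `P` on `A` lies in `Cont (A, τ)` iff it
is `S`-continuous; moreover, in that case the composition `S → A → A/P` is injective.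
-/

theorem inCont_universal_topology_iff_scontinuous {S A : Type u} [TropSub S] [CommSemiring A]
    (ι : S →+* A) (τ : TopologicalSpace A)
    (hadd : @ContinuousAdd A τ _) (hmul : @ContinuousMul A τ _)
    (hι : @Continuous S A (canonicalTopology S) τ ι)
    (huniv : ∀ (B : Type u) [CommSemiring B] [Nontrivial B] (tB : TopologicalSpace B),
      @ContinuousAdd B tB _ → @ContinuousMul B tB _ →
      ∀ φ : A →+* B,
        (@Continuous A B τ tB φ ↔ @Continuous S B (canonicalTopology S) tB fun s => φ (ι s)))
    (P : RingCon A) (hP : IsPrimeCon P) :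
    (InCont τ P ↔ ∀ f g : A, ¬ P f 0 → ¬ P g 0 → ∃ b : S, b ≠ 0 ∧ ltP P (ι b * g) f) ∧
      (InCont τ P → ∀ b b' : S, P (ι b) (ι b') → b = b') := by
  refine ⟨⟨?_, ?_⟩, ?_⟩
  · -- InCont → SCont
    rintro ⟨W⟩ f g hf hg
    letI := W.instK
    letI : Nontrivial W.K := ⟨0, 1, IdemTO.zero_ne_one'⟩
    have hcrit : ∀ {a : W.K}, a ≠ 0 → ∃ b : S, b ≠ 0 ∧ W.v (ι b) ≤ a := fun ha =>
      witness_crit ι W.v τ W.cont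
        (huniv W.K (canonicalTopology W.K) IdemTO.continuousAdd IdemTO.continuousMul W.v) ha
    have hvf : W.v f ≠ 0 := fun h => hf ((W.ker f 0).mpr (by rw [h, map_zero]))
    have hvg : W.v g ≠ 0 := fun h => hg ((W.ker g 0).mpr (by rw [h, map_zero]))
    obtain ⟨u, hu0, hu1⟩ := IdemTO.exists_lt_one (K := W.K)
    obtain ⟨w, hw⟩ := IdemTOSemifield.exists_inv (W.v g) hvg
    have hw0 : w ≠ 0 := by
      rintro rfl; rw [mul_zero] at hw; exact IdemTO.zero_ne_one' hw
    have ha : u * (W.v f * w) ≠ 0 :=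
      IdemTO.mul_ne_zero' hu0 (IdemTO.mul_ne_zero' hvf hw0)
    obtain ⟨b, hb0, hble⟩ := hcrit ha
    have h1 : W.v (ι b) * W.v g ≤ u * (W.v f * w) * W.v g :=
      IdemTO.mul_le_mul_right (W.v g) hble
    have h2 : u * (W.v f * w) * W.v g = u * W.v f := by
      rw [mul_assoc u, mul_assoc (W.v f), mul_comm w, hw, mul_one]
    have h3 : u * W.v f < W.v f := by
      have hle : u * W.v f ≤ 1 * W.v f := IdemTO.mul_le_mul_right _ (le_of_lt hu1)
      rw [one_mul] at hle
      refine lt_of_le_of_ne hle ?_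
      intro h
      apply ne_of_lt hu1
      refine IdemTO.mul_cancel hvf ?_
      rw [mul_comm _ u, mul_one, h]
    have hkey : W.v (ι b * g) < W.v f := by
      rw [map_mul]
      exact lt_of_le_of_lt (le_of_le_of_eq h1 h2) h3
    refine ⟨b, hb0, ?_, ?_⟩
    · refine (W.ker _ _).mpr ?_
      rw [map_add, IdemTOSemifield.add_eq_max, max_eq_right (le_of_lt hkey)]
    · intro h
      exact (ne_of_lt hkey) ((W.ker _ _).mp h)
  · -- SCont → InCont
    intro hsc
    have hnt : ∃ a : A, ¬ P a 0 ∧ ¬ P a 1 := by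
      obtain ⟨b, hb0, hlt⟩ := hsc 1 1 (kone P hP) (kone P hP)
      refine ⟨ι b * 1, ?_, hlt.2⟩
      intro h
      obtain ⟨b', hb'⟩ := IdemTOSemifield.exists_inv b hb0
      have h5 : P (ι b' * (ι b * 1)) (ι b' * 0) := P.mul (P.refl (ι b')) h
      refine hP.proper (P.symm ?_)
      have e : ι b' * (ι b * 1) = 1 := by
        rw [mul_one, ← map_mul, mul_comm b' b, hb', map_one]
      exact Pre P e.symm (mul_zero (ι b')).symm h5
    letI : Nontrivial (KQ P hP hnt) := ⟨0, 1, IdemTO.zero_ne_one'⟩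
    refine ⟨⟨KQ P hP hnt, kHom P hP hnt, ?_, ?_, ?_⟩⟩
    · -- continuity
      refine (huniv (KQ P hP hnt) (canonicalTopology _) IdemTO.continuousAdd
        IdemTO.continuousMul (kHom P hP hnt)).mpr ?_
      refine IdemTO.continuous_of_crit (by rw [map_zero, map_zero]; rfl)
        (IdemTO.hom_mono ((kHom P hP hnt).comp ι)) ?_
      intro a
      induction a using Quotient.ind with
      | _ p =>
      rcases p with ⟨f, g, hg⟩
      intro ha
      have hf : ¬ P f 0 := by
        intro h
        exact ha ((kmk_eq P hP hnt).mpr (Pre P (mul_one f) (zero_mul g) h))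
      obtain ⟨b, hb0, hlt⟩ := hsc f g hf hg
      exact ⟨b, hb0, kHom_le_mk P hP hnt hlt.1⟩
    · exact fun f g => kHom_ker P hP hnt
    · have h9 := hnt
      obtain ⟨a, ha0, ha1⟩ := h9
      refine ⟨kHom P hP hnt a, ⟨a, rfl⟩, ?_, ?_⟩
      · intro h
        exact ha0 ((kHom_ker P hP hnt).mpr (h.trans (map_zero _).symm))
      · intro h
        exact ha1 ((kHom_ker P hP hnt).mpr (h.trans (map_one _).symm))
  · -- injectivity
    rintro ⟨W⟩ b b' hbb'
    letI := W.instK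
    letI : Nontrivial W.K := ⟨0, 1, IdemTO.zero_ne_one'⟩
    have hcrit : ∀ {a : W.K}, a ≠ 0 → ∃ e : S, e ≠ 0 ∧ W.v (ι e) ≤ a := fun ha =>
      witness_crit ι W.v τ W.cont
        (huniv W.K (canonicalTopology W.K) IdemTO.continuousAdd IdemTO.continuousMul W.v) ha
    set ψ : S →+* W.K := W.v.comp ι with hψdef
    have hbb : ψ b = ψ b' := (W.ker _ _).mp hbb'
    have hnz : ∀ s : S, s ≠ 0 → ψ s ≠ 0 := by
      intro s hs h
      obtain ⟨t, ht⟩ := IdemTOSemifield.exists_inv s hs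
      have h5 : ψ s * ψ t = 1 := by rw [← map_mul, ht, map_one]
      rw [h, zero_mul] at h5
      exact IdemTO.zero_ne_one' h5
    have key : ∀ x y : S, x < y → ψ x ≠ ψ y := by
      intro x y hxy heq
      by_cases hx0 : x = 0
      · subst hx0
        exact hnz y (ne_of_gt hxy) (heq.symm.trans (map_zero ψ))
      · obtain ⟨x', hx'⟩ := IdemTOSemifield.exists_inv x hx0
        have hx'0 : x' ≠ 0 := by
          rintro rfl; rw [mul_zero] at hx'; exact IdemTO.zero_ne_one' hx'
        have hc1 : 1 < y * x' := by
          have h1 : x * x' ≤ y * x' := IdemTO.mul_le_mul_right x' (le_of_lt hxy)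
          rw [hx'] at h1
          refine lt_of_le_of_ne h1 ?_
          intro h
          apply ne_of_lt hxy
          refine IdemTO.mul_cancel hx'0 ?_
          rw [mul_comm x' x, mul_comm x' y, hx', ← h]
        have hψc : ψ (y * x') = 1 := by
          rw [map_mul, ← heq, ← map_mul, hx', map_one]
        obtain ⟨u, hu0, hu1⟩ := IdemTO.exists_lt_one (K := W.K)
        obtain ⟨d, hd0, hdle⟩ := hcrit hu0
        obtain ⟨n, hn⟩ := TropSub.arch hc1 hd0
        have h6 : (1 : W.K) ≤ ψ d := by
          have h4 := IdemTO.hom_mono ψ hn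
          rw [map_one, map_mul, map_pow, hψc, one_pow, mul_one] at h4
          exact h4
        have h7 : (1 : W.K) ≤ u := le_trans h6 hdle
        exact absurd hu1 (not_lt.mpr h7)
    rcases lt_trichotomy b b' with h | h | h
    · exact absurd hbb (key b b' h)
    · exact h
    · exact absurd hbb.symm (key b' b h)
end

section
/- Let S be a sub-semifield of 𝕋 (with S ≠ 𝔹) and let A be a topological S-algebra. Then for every prime congruence P ∈ Cont A there exists a unique P' ∈ Cont A such that P ⊆ P' and P' is maximal with respect to inclusion among the elements of Cont A. -/
universe u

/-!
Statement 11: for a topological `S`-algebra `A` (with `S` a sub-semifield of `𝕋`), every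
`P ∈ Cont A` is contained in a unique maximal element of `Cont A`.
-/

namespace MaxCont

section API

variable {M : Type*} [IdemTOSemifield M]

theorem le_iff (a b : M) : a ≤ b ↔ a + b = b := by
  rw [IdemTOSemifield.add_eq_max]; exact max_eq_right_iff.symm

theorem bot_le' (a : M) : (0 : M) ≤ a := (le_iff _ _).mpr (zero_add a)

theorem one_ne_zero' : (1 : M) ≠ 0 := by
  obtain ⟨u, hu0, hu1⟩ := IdemTOSemifield.exists_nontrivial_unit (K := M)
  intro h
  exact hu0 (by calc u = u * 1 := (mul_one u).symm
                   _ = u * 0 := by rw [h]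
                   _ = 0 := mul_zero u)

theorem mul_ne_zero' {a b : M} (ha : a ≠ 0) (hb : b ≠ 0) : a * b ≠ 0 := by
  obtain ⟨a', ha'⟩ := IdemTOSemifield.exists_inv a ha
  obtain ⟨b', hb'⟩ := IdemTOSemifield.exists_inv b hb
  intro h
  apply one_ne_zero' (M := M)
  calc (1 : M) = (a * a') * (b * b') := by rw [ha', hb', one_mul]
    _ = (a * b) * (a' * b') := by ring
    _ = 0 := by rw [h, zero_mul]

theorem mul_left_cancel' {a b c : M} (ha : a ≠ 0) (h : a * b = a * c) : b = c := by
  obtain ⟨a', ha'⟩ := IdemTOSemifield.exists_inv a ha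
  calc b = (a * a') * b := by rw [ha', one_mul]
    _ = a' * (a * b) := by ring
    _ = a' * (a * c) := by rw [h]
    _ = (a * a') * c := by ring
    _ = c := by rw [ha', one_mul]

theorem mul_le_left {a b c : M} (h : b ≤ c) : a * b ≤ a * c := by
  rw [le_iff] at h ⊢
  calc a * b + a * c = a * (b + c) := (left_distrib a b c).symm
    _ = a * c := by rw [h]

theorem le_of_mul_le_left {a b c : M} (ha : a ≠ 0) (h : a * b ≤ a * c) : b ≤ c := by
  obtain ⟨a', ha'⟩ := IdemTOSemifield.exists_inv a ha
  have := mul_le_left (a := a') h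
  calc b = (a * a') * b := by rw [ha', one_mul]
    _ = a' * (a * b) := by ring
    _ ≤ a' * (a * c) := this
    _ = (a * a') * c := by ring
    _ = c := by rw [ha', one_mul]

theorem mul_lt_left {a b c : M} (ha : a ≠ 0) (h : b < c) : a * b < a * c := by
  refine lt_of_le_of_ne (mul_le_left h.le) (fun he => h.ne ?_)
  exact mul_left_cancel' ha he

theorem pow_le_pow' {a b : M} (h : a ≤ b) (n : ℕ) : a ^ n ≤ b ^ n := by
  induction n with
  | zero => simp
  | succ n ih =>
    rw [pow_succ, pow_succ]
    calc a ^ n * a ≤ a ^ n * b := mul_le_left h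
      _ = b * a ^ n := mul_comm _ _
      _ ≤ b * b ^ n := mul_le_left ih
      _ = b ^ n * b := mul_comm _ _

theorem pow_ne_zero' {a : M} (ha : a ≠ 0) (n : ℕ) : a ^ n ≠ 0 := by
  induction n with
  | zero => simpa using one_ne_zero' (M := M)
  | succ n ih => rw [pow_succ]; exact mul_ne_zero' ih ha

theorem mul_lt_mul'' {a b c d : M} (h1 : a < b) (h2 : c < d) (hb : b ≠ 0) (hc : c ≠ 0) :
    a * c < b * d := by
  calc a * c = c * a := mul_comm _ _
    _ < c * b := mul_lt_left hc h1
    _ = b * c := mul_comm _ _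
    _ < b * d := mul_lt_left hb h2

theorem lt_of_sq_lt_sq {a b : M} (h : a * a < b * b) : a < b := by
  by_contra hab
  push_neg at hab
  exact absurd h (not_lt.mpr (calc b * b ≤ b * a := mul_le_left hab
    _ = a * b := mul_comm _ _
    _ ≤ a * a := mul_le_left hab))

theorem exists_lt_one : ∃ t : M, t ≠ 0 ∧ t < 1 := by
  obtain ⟨u, hu0, hu1⟩ := IdemTOSemifield.exists_nontrivial_unit (K := M)
  rcases lt_or_gt_of_ne hu1 with h | h
  · exact ⟨u, hu0, h⟩
  · obtain ⟨w, hw⟩ := IdemTOSemifield.exists_inv u hu0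
    have hw0 : w ≠ 0 := by
      intro h0; apply one_ne_zero' (M := M); rw [← hw, h0, mul_zero]
    refine ⟨w, hw0, ?_⟩
    by_contra hw1
    push_neg at hw1
    have : u ≤ u * w := by
      calc u = u * 1 := (mul_one u).symm
        _ ≤ u * w := mul_le_left hw1
    rw [hw] at this
    exact absurd h (not_lt.mpr this)

/-- monotonicity of semiring homs between idempotent totally ordered semifields -/
theorem hom_mono {N : Type*} [IdemTOSemifield N] (ρ : M →+* N) {a b : M} (h : a ≤ b) :
    ρ a ≤ ρ b := by
  rw [le_iff] at h ⊢
  rw [← map_add, h]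

theorem hom_ne_zero {N : Type*} [IdemTOSemifield N] (ρ : M →+* N) {a : M} (ha : a ≠ 0) :
    ρ a ≠ 0 := by
  obtain ⟨a', ha'⟩ := IdemTOSemifield.exists_inv a ha
  intro h
  apply one_ne_zero' (M := N)
  rw [← map_one ρ, ← ha', map_mul, h, zero_mul]

/-- Characterization of open sets in the canonical topology. -/
theorem isOpen_iff (U : Set M) :
    @IsOpen M (canonicalTopology M) U ↔ ((0 : M) ∈ U → ∃ a : M, a ≠ 0 ∧ Set.Iic a ⊆ U) := by
  constructor
  · intro h
    induction h with
    | basic s hs =>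
      rcases hs with ⟨a, ha, rfl⟩ | ⟨a, ha, rfl⟩
      · intro h0; exact absurd h0.symm ha
      · intro _; exact ⟨a, ha, le_refl _⟩
    | univ =>
      intro _
      obtain ⟨u, hu0, _⟩ := IdemTOSemifield.exists_nontrivial_unit (K := M)
      exact ⟨u, hu0, Set.subset_univ _⟩
    | inter s t _ _ ihs iht =>
      intro h0
      obtain ⟨a, ha, hsa⟩ := ihs h0.1
      obtain ⟨b, hb, htb⟩ := iht h0.2
      rcases le_total a b with hab | hab
      · exact ⟨a, ha, fun x hx => ⟨hsa hx, htb (le_trans hx hab)⟩⟩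
      · exact ⟨b, hb, fun x hx => ⟨hsa (le_trans hx hab), htb hx⟩⟩
    | sUnion T _ ih =>
      intro h0
      obtain ⟨s, hs, h0s⟩ := h0
      obtain ⟨a, ha, hsa⟩ := ih s hs h0s
      exact ⟨a, ha, fun x hx => ⟨s, hs, hsa hx⟩⟩
  · intro h
    by_cases h0 : (0 : M) ∈ U
    · obtain ⟨a, ha, hsub⟩ := h h0
      have hU : U = ⋃₀ {V : Set M | V = Set.Iic a ∨ ∃ x, x ∈ U ∧ x ≠ 0 ∧ V = {x}} := by
        apply Set.eq_of_subset_of_subset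
        · intro x hx
          by_cases hx0 : x = 0
          · exact ⟨Set.Iic a, Or.inl rfl, by simpa [hx0] using bot_le' a⟩
          · exact ⟨{x}, Or.inr ⟨x, hx, hx0, rfl⟩, rfl⟩
        · rintro x ⟨V, hV | ⟨y, hy, hy0, rfl⟩, hxV⟩
          · exact hsub (hV ▸ hxV)
          · rwa [Set.mem_singleton_iff.mp hxV]
      rw [hU]
      apply TopologicalSpace.GenerateOpen.sUnion
      rintro V (rfl | ⟨x, hx, hx0, rfl⟩)
      · exact TopologicalSpace.GenerateOpen.basic _ (Or.inr ⟨a, ha, rfl⟩)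
      · exact TopologicalSpace.GenerateOpen.basic _ (Or.inl ⟨x, hx0, rfl⟩)
    · have hU : U = ⋃₀ {V : Set M | ∃ x, x ∈ U ∧ x ≠ 0 ∧ V = {x}} := by
        apply Set.eq_of_subset_of_subset
        · intro x hx
          exact ⟨{x}, ⟨x, hx, fun hx0 => h0 (hx0 ▸ hx), rfl⟩, rfl⟩
        · rintro x ⟨V, ⟨y, hy, hy0, rfl⟩, hxV⟩
          rwa [Set.mem_singleton_iff.mp hxV]
      rw [hU]
      apply TopologicalSpace.GenerateOpen.sUnion
      rintro V ⟨x, hx, hx0, rfl⟩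
      exact TopologicalSpace.GenerateOpen.basic _ (Or.inl ⟨x, hx0, rfl⟩)

end API

end MaxCont
namespace MaxCont

section KCON

variable {K : Type*} [IdemTOSemifield K]

/-- The relation for the quotient by the largest convex subgroup not containing `c`. -/
def krel (c : K) (x y : K) : Prop :=
  (x = 0 ∧ y = 0) ∨ (x ≠ 0 ∧ y ≠ 0 ∧ ∀ n : ℕ, c * x ^ n < y ^ n ∧ c * y ^ n < x ^ n)

variable {c : K}

theorem krel_refl (hc0 : c ≠ 0) (hc1 : c < 1) (x : K) : krel c x x := by
  by_cases hx : x = 0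
  · exact Or.inl ⟨hx, hx⟩
  · refine Or.inr ⟨hx, hx, fun n => ?_⟩
    have : x ^ n * c < x ^ n * 1 := mul_lt_left (pow_ne_zero' hx n) hc1
    rw [mul_one, mul_comm] at this
    exact ⟨this, this⟩

theorem krel_symm {x y : K} (h : krel c x y) : krel c y x := by
  rcases h with ⟨h1, h2⟩ | ⟨h1, h2, h3⟩
  · exact Or.inl ⟨h2, h1⟩
  · exact Or.inr ⟨h2, h1, fun n => ⟨(h3 n).2, (h3 n).1⟩⟩

/-- key doubling step: from `c * x^(2n) < y^(2n)` and `c * y^(2n) < z^(2n)`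
  conclude `c * x^n < z^n`. -/
theorem krel_double (hc0 : c ≠ 0) {x y z : K} (hx : x ≠ 0) (hy : y ≠ 0) (hz : z ≠ 0) (n : ℕ)
    (h1 : c * x ^ (2 * n) < y ^ (2 * n)) (h2 : c * y ^ (2 * n) < z ^ (2 * n)) :
    c * x ^ n < z ^ n := by
  apply lt_of_sq_lt_sq
  have e1 : (c * x ^ n) * (c * x ^ n) = c * (c * x ^ (2 * n)) := by
    ring
  have e2 : (z ^ n) * (z ^ n) = z ^ (2 * n) := by
    ring
  rw [e1, e2]
  calc c * (c * x ^ (2 * n)) < c * y ^ (2 * n) := mul_lt_left hc0 h1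
    _ < z ^ (2 * n) := h2

theorem krel_trans (hc0 : c ≠ 0) {x y z : K} (hxy : krel c x y) (hyz : krel c y z) : krel c x z := by
  rcases hxy with ⟨h1, h2⟩ | ⟨hx, hy, hxy⟩
  · rcases hyz with ⟨h3, h4⟩ | ⟨hy, _, _⟩
    · exact Or.inl ⟨h1, h4⟩
    · exact absurd h2 hy
  · rcases hyz with ⟨h3, _⟩ | ⟨_, hz, hyz⟩
    · exact absurd h3 hy
    · refine Or.inr ⟨hx, hz, fun n => ?_⟩
      exact ⟨krel_double hc0 hx hy hz n (hxy (2 * n)).1 (hyz (2 * n)).1,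
        krel_double hc0 hz hy hx n (hyz (2 * n)).2 (hxy (2 * n)).2⟩

theorem krel_mul (hc0 : c ≠ 0) {x y x' y' : K} (h : krel c x y) (h' : krel c x' y') :
    krel c (x * x') (y * y') := by
  rcases h with ⟨h1, h2⟩ | ⟨hx, hy, h3⟩
  · exact Or.inl ⟨by rw [h1, zero_mul], by rw [h2, zero_mul]⟩
  rcases h' with ⟨h1', h2'⟩ | ⟨hx', hy', h3'⟩
  · exact Or.inl ⟨by rw [h1', mul_zero], by rw [h2', mul_zero]⟩
  refine Or.inr ⟨mul_ne_zero' hx hx', mul_ne_zero' hy hy', fun n => ?_⟩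
  have key : ∀ a b a' b' : K, a ≠ 0 → b ≠ 0 → a' ≠ 0 → b' ≠ 0 →
      (∀ m : ℕ, c * a ^ m < b ^ m) → (∀ m : ℕ, c * a' ^ m < b' ^ m) →
      c * (a * a') ^ n < (b * b') ^ n := by
    intro a b a' b' ha hb ha' hb' hab hab'
    apply lt_of_sq_lt_sq
    have e1 : (c * (a * a') ^ n) * (c * (a * a') ^ n)
        = (c * a ^ (2 * n)) * (c * a' ^ (2 * n)) := by
      ring
    have e2 : ((b * b') ^ n) * ((b * b') ^ n) = b ^ (2 * n) * b' ^ (2 * n) := by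
      ring
    rw [e1, e2]
    exact mul_lt_mul'' (hab (2 * n)) (hab' (2 * n)) (pow_ne_zero' hb _)
      (mul_ne_zero' hc0 (pow_ne_zero' ha' _))
  exact ⟨key x y x' y' hx hy hx' hy' (fun m => (h3 m).1) (fun m => (h3' m).1),
    key y x y' x' hy hx hy' hx' (fun m => (h3 m).2) (fun m => (h3' m).2)⟩

theorem krel_add {x y x' y' : K} (h : krel c x y) (h' : krel c x' y') :
    krel c (x + x') (y + y') := by
  -- reduce using max structure
  have hmax : ∀ a b : K, a + b = max a b := IdemTOSemifield.add_eq_max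
  rcases h with ⟨rfl, rfl⟩ | ⟨hx, hy, h3⟩
  · rwa [zero_add, zero_add]
  rcases h' with ⟨rfl, rfl⟩ | ⟨hx', hy', h3'⟩
  · rw [add_zero, add_zero]; exact Or.inr ⟨hx, hy, h3⟩
  have hxx' : x + x' ≠ 0 := by
    rw [hmax]
    rcases le_total x x' with h | h
    · rw [max_eq_right h]; exact hx'
    · rw [max_eq_left h]; exact hx
  have hyy' : y + y' ≠ 0 := by
    rw [hmax]
    rcases le_total y y' with h | h
    · rw [max_eq_right h]; exact hy'
    · rw [max_eq_left h]; exact hy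
  refine Or.inr ⟨hxx', hyy', fun n => ?_⟩
  have key : ∀ a b a' b' : K,
      (∀ m : ℕ, c * a ^ m < b ^ m) → (∀ m : ℕ, c * a' ^ m < b' ^ m) →
      c * (a + a') ^ n < (b + b') ^ n := by
    intro a b a' b' hab hab'
    have hb : b ^ n ≤ (b + b') ^ n := pow_le_pow' ((le_iff _ _).mpr (by
      rw [← add_assoc, hmax b b, max_self])) n
    have hb' : b' ^ n ≤ (b + b') ^ n := pow_le_pow' ((le_iff _ _).mpr (by
      rw [add_comm b b', ← add_assoc, hmax b' b', max_self])) n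
    rcases le_total a a' with h | h
    · rw [hmax, max_eq_right h]
      exact lt_of_lt_of_le (hab' n) hb'
    · rw [hmax, max_eq_left h]
      exact lt_of_lt_of_le (hab n) hb
  exact ⟨key x y x' y' (fun m => (h3 m).1) (fun m => (h3' m).1),
    key y x y' x' (fun m => (h3 m).2) (fun m => (h3' m).2)⟩

/-- The congruence on `K` given by the largest convex subgroup not containing `c`. -/
def kcon (hc0 : c ≠ 0) (hc1 : c < 1) : RingCon K where
  r := krel c
  iseqv := ⟨krel_refl hc0 hc1, krel_symm, krel_trans hc0⟩
  mul' := krel_mul hc0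
  add' := krel_add

end KCON

end MaxCont
namespace MaxCont

section QUOT

variable {K : Type u} [IdemTOSemifield K]

theorem exists_coe (C : RingCon K) (a : C.Quotient) : ∃ x : K, (x : C.Quotient) = a :=
  Quotient.exists_rep a

/-- The canonical linear order on the quotient of an idempotent semifield by a congruence. -/
noncomputable def qLO (C : RingCon K) : LinearOrder C.Quotient where
  le a b := a + b = b
  le_refl a := by
    obtain ⟨x, rfl⟩ := exists_coe C a
    show ((x : K) : C.Quotient) + x = x
    rw [← RingCon.coe_add]
    rw [IdemTOSemifield.add_eq_max, max_self]
  le_trans a b c hab hbc := by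
    show a + c = c
    calc a + c = a + (b + c) := by rw [hbc]
      _ = (a + b) + c := (add_assoc a b c).symm
      _ = b + c := by rw [hab]
      _ = c := hbc
  le_antisymm a b hab hba := by
    calc a = b + a := hba.symm
      _ = a + b := add_comm b a
      _ = b := hab
  le_total a b := by
    obtain ⟨x, rfl⟩ := exists_coe C a
    obtain ⟨y, rfl⟩ := exists_coe C b
    rcases le_total x y with h | h
    · left
      show ((x : K) : C.Quotient) + y = y
      rw [← RingCon.coe_add, (le_iff x y).mp h]
    · right
      show ((y : K) : C.Quotient) + x = x
      rw [← RingCon.coe_add, (le_iff y x).mp h]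
  toDecidableLE _ _ := Classical.dec _

theorem qLO_le_def (C : RingCon K) (a b : C.Quotient) :
    (qLO C).le a b ↔ a + b = b := Iff.rfl

/-- The quotient map is monotone. -/
theorem mk'_mono (C : RingCon K) {x y : K} (h : x ≤ y) :
    (qLO C).le (x : C.Quotient) (y : C.Quotient) := by
  show ((x : K) : C.Quotient) + y = y
  rw [← RingCon.coe_add, (le_iff x y).mp h]

variable {c : K}

/-- The soughtafter idempotent totally ordered semifield structure on the quotient. -/
noncomputable def qSemifield (hc0 : c ≠ 0) (hc1 : c < 1) :
    IdemTOSemifield (kcon hc0 hc1).Quotient :=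
  letI C := kcon hc0 hc1
  letI LO : LinearOrder C.Quotient := qLO C
  { (inferInstance : CommSemiring C.Quotient), LO with
    add_eq_max := by
      intro a b
      rcases LO.le_total a b with h | h
      · rw [max_eq_right h]; exact h
      · rw [max_eq_left h]
        calc a + b = b + a := add_comm a b
          _ = a := h
    exists_inv := by
      intro a ha
      obtain ⟨x, rfl⟩ := exists_coe C a
      have hx : x ≠ 0 := by
        rintro rfl
        exact ha (RingCon.coe_zero C)
      obtain ⟨y, hy⟩ := IdemTOSemifield.exists_inv x hx
      exact ⟨(y : C.Quotient), by rw [← RingCon.coe_mul, hy, RingCon.coe_one]⟩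
    exists_nontrivial_unit := by
      refine ⟨(c : C.Quotient), ?_, ?_⟩
      · intro h
        rw [← RingCon.coe_zero, RingCon.eq] at h
        rcases h with ⟨h, _⟩ | ⟨_, h, _⟩
        · exact hc0 h
        · exact h rfl
      · intro h
        rw [← RingCon.coe_one, RingCon.eq] at h
        rcases h with ⟨h, _⟩ | ⟨_, _, h⟩
        · exact hc0 h
        · have := (h 1).2
          simp at this
  }

end QUOT

end MaxCont
namespace MaxCont

section TOP

/-- Continuity of a hom into an idempotent semifield, at `0`: small elements map small. -/
theorem cofinal_small {S' : Type*} [IdemTOSemifield S'] {N : Type*} [IdemTOSemifield N]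
    (ρ : S' →+* N)
    (hρ : @Continuous S' N (canonicalTopology S') (canonicalTopology N) ρ)
    {ℓ : N} (hℓ : ℓ ≠ 0) : ∃ b : S', b ≠ 0 ∧ ∀ s : S', s ≤ b → ρ s ≤ ℓ := by
  have hopen : @IsOpen N (canonicalTopology N) (Set.Iic ℓ) :=
    TopologicalSpace.GenerateOpen.basic _ (Or.inr ⟨ℓ, hℓ, rfl⟩)
  have hpre : @IsOpen S' (canonicalTopology S') (⇑ρ ⁻¹' Set.Iic ℓ) :=
    @Continuous.isOpen_preimage _ _ (canonicalTopology S') (canonicalTopology N) _ hρ _ hopen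
  have h0 : (0 : S') ∈ ⇑ρ ⁻¹' Set.Iic ℓ := by
    simp only [Set.mem_preimage, Set.mem_Iic, map_zero]
    exact bot_le' ℓ
  obtain ⟨b, hb, hsub⟩ := (isOpen_iff _).mp hpre h0
  exact ⟨b, hb, fun s hs => hsub hs⟩

/-- The sub-semifields of `𝕋` are archimedean. -/
theorem trop_arch {S : Type*} [TropSub S] {t b : S} (ht1 : t < 1) (hb : b ≠ 0) :
    ∃ n : ℕ, t ^ n ≤ b := by
  let e := TropSub.emb (S := S)
  have hmono : ∀ {x y : S}, x ≤ y → e x ≤ e y := fun {x y} h => hom_mono e h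
  have hinj : Function.Injective e := TropSub.emb_injective
  have het : (Trop.toNNReal (e t) : NNReal) < 1 := by
    have h1 : e t ≤ e 1 := hmono ht1.le
    rw [map_one] at h1
    have h2 : e t ≠ 1 := by
      intro h; exact ht1.ne (hinj (by rw [h, map_one]))
    exact lt_of_le_of_ne h1 h2
  have heb : (0 : NNReal) < Trop.toNNReal (e b) := by
    rcases eq_or_lt_of_le (zero_le (a := Trop.toNNReal (e b))) with h | h
    · exfalso
      apply hb
      apply hinj
      rw [map_zero]
      exact h.symm
    · exact h
  obtain ⟨n, hn⟩ := exists_pow_lt_of_lt_one heb het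
  refine ⟨n, ?_⟩
  by_contra hc
  push_neg at hc
  have : e b ≤ e (t ^ n) := hmono hc.le
  rw [map_pow] at this
  have hlt : Trop.toNNReal (e b) ≤ Trop.toNNReal (e t) ^ n := this
  exact absurd hn (not_lt.mpr hlt)

/-- A continuous hom from a tropical sub-semifield is "non-collapsing": `ρ t < 1` for `t < 1`. -/
theorem hom_lt_one {S : Type*} [TropSub S] {N : Type*} [IdemTOSemifield N]
    (ρ : S →+* N)
    (hρ : @Continuous S N (canonicalTopology S) (canonicalTopology N) ρ)
    {t : S} (ht0 : t ≠ 0) (ht1 : t < 1) : ρ t < 1 := by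
  have hle : ρ t ≤ 1 := by
    have := hom_mono ρ ht1.le
    rwa [map_one] at this
  rcases lt_or_eq_of_le hle with h | h
  · exact h
  exfalso
  obtain ⟨ℓ, hℓ0, hℓ1⟩ := exists_lt_one (M := N)
  obtain ⟨b, hb, hsmall⟩ := cofinal_small ρ hρ hℓ0
  obtain ⟨n, hn⟩ := trop_arch ht1 hb
  have h1 : ρ (t ^ n) ≤ ℓ := hsmall _ hn
  have h2 : ρ (t ^ n) = 1 := by rw [map_pow, h]; exact one_pow n
  rw [h2] at h1
  exact absurd (lt_of_le_of_lt h1 hℓ1) (lt_irrefl 1)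

end TOP

end MaxCont
namespace MaxCont

section WIT

variable {K : Type u} [IdemTOSemifield K] {A : Type u} [CommSemiring A]

/-- Pull back a congruence along a homomorphism. -/
def pullCon (C : RingCon K) (v : A →+* K) : RingCon A where
  r f g := C (v f) (v g)
  iseqv := ⟨fun _ => C.refl _, C.symm, C.trans⟩
  mul' {_ _ _ _} h1 h2 := by
    have := C.mul h1 h2
    rwa [← map_mul, ← map_mul] at this
  add' {_ _ _ _} h1 h2 := by
    have := C.add h1 h2
    rwa [← map_add, ← map_add] at this

theorem pullCon_iff (C : RingCon K) (v : A →+* K) (f g : A) :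
    pullCon C v f g ↔ C (v f) (v g) := Iff.rfl

/-- The witness showing that the pullback of the maximal-convex-subgroup quotient is in
`Cont A`. -/
noncomputable def maxWitness (tA : TopologicalSpace A)
    (v : A →+* K) (hv : @Continuous A K tA (canonicalTopology K) v)
    {c : K} (hc0 : c ≠ 0) (hc1 : c < 1) (hcr : c ∈ Set.range ⇑v) :
    ContWitness tA (pullCon (kcon hc0 hc1) v) :=
  letI C : RingCon K := kcon hc0 hc1
  letI instK : IdemTOSemifield C.Quotient := qSemifield hc0 hc1
  letI w : A →+* C.Quotient := (RingCon.mk' C).comp v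
  { K := C.Quotient
    instK := instK
    v := w
    cont := by
      rw [canonicalTopology]
      rw [continuous_generateFrom_iff]
      rintro s (⟨a, ha, rfl⟩ | ⟨a, ha, rfl⟩)
      · have hpre : ⇑w ⁻¹' {a} = ⇑v ⁻¹' (⇑(RingCon.mk' C) ⁻¹' {a}) := rfl
        show IsOpen (⇑v ⁻¹' (⇑(RingCon.mk' C) ⁻¹' {a}))
        apply @Continuous.isOpen_preimage _ _ tA (canonicalTopology K) _ hv
        rw [isOpen_iff]
        intro h0
        exfalso
        apply ha
        have : ((0 : K) : C.Quotient) = a := h0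
        rw [← this, RingCon.coe_zero]; rfl
      · have hpre : ⇑w ⁻¹' (Set.Iic a) = ⇑v ⁻¹' (⇑(RingCon.mk' C) ⁻¹' (Set.Iic a)) := rfl
        show IsOpen (⇑v ⁻¹' (⇑(RingCon.mk' C) ⁻¹' (Set.Iic a)))
        apply @Continuous.isOpen_preimage _ _ tA (canonicalTopology K) _ hv
        rw [isOpen_iff]
        intro _
        obtain ⟨x, hx⟩ := exists_coe C a
        have hx0 : x ≠ 0 := by
          rintro rfl
          exact ha (by rw [← hx, RingCon.coe_zero]; rfl)
        refine ⟨x, hx0, fun y hy => ?_⟩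
        show (y : C.Quotient) ∈ Set.Iic a
        rw [← hx]
        exact mk'_mono C hy
    ker := fun f g => (RingCon.eq C).symm
    nontrivialImage := by
      obtain ⟨a, ha⟩ := hcr
      refine ⟨(c : C.Quotient), ⟨a, by rw [← ha]; rfl⟩, ?_, ?_⟩
      · intro h
        change ((c : K) : C.Quotient) = ((0 : K) : C.Quotient) at h
        rw [RingCon.eq] at h
        rcases h with ⟨h, _⟩ | ⟨_, h, _⟩
        · exact hc0 h
        · exact h rfl
      · intro h
        change ((c : K) : C.Quotient) = ((1 : K) : C.Quotient) at h
        rw [RingCon.eq] at h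
        rcases h with ⟨h, _⟩ | ⟨_, _, h⟩
        · exact hc0 h
        · have := (h 1).2
          simp at this }

end WIT

end MaxCont
namespace MaxCont

section MAIN

variable {S A : Type u} [TropSub S] [CommSemiring A]
variable {tA : TopologicalSpace A} {ι : S →+* A}
variable {P Q : RingCon A}

/-- Monotonicity transfer between two comparable points of `Cont A`. -/
theorem cont_mono (W : ContWitness tA P) (W' : ContWitness tA Q)
    (hPQ : ∀ f g : A, P f g → Q f g) (f g : A)
    (h : letI := W.instK; W.v f ≤ W.v g) :
    letI := W'.instK; W'.v f ≤ W'.v g := by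
  letI := W.instK
  letI := W'.instK
  have h1 : W.v (f + g) = W.v g := by
    rw [map_add, (le_iff _ _).mp h]
  have h2 : W'.v (f + g) = W'.v g := (W'.ker _ _).mp (hPQ _ _ ((W.ker _ _).mpr h1))
  rw [map_add] at h2
  exact (le_iff _ _).mpr h2

/-- Supports agree along inclusions in `Cont A`. -/
theorem cont_supp (hι : @Continuous S A (canonicalTopology S) tA ι)
    (W : ContWitness tA P) (W' : ContWitness tA Q)
    (hPQ : ∀ f g : A, P f g → Q f g) (f : A)
    (h : letI := W'.instK; W'.v f = 0) :
    letI := W.instK; W.v f = 0 := by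
  letI := W.instK
  letI := W'.instK
  by_contra hvf
  have hσ : @Continuous S W.K (canonicalTopology S) (canonicalTopology W.K) ⇑(W.v.comp ι) := by
    rw [RingHom.coe_comp]
    exact @Continuous.comp S A W.K (canonicalTopology S) tA (canonicalTopology W.K) _ _ W.cont hι
  obtain ⟨b, hb, hsmall⟩ := cofinal_small (W.v.comp ι) hσ hvf
  have hle : W.v (ι b) ≤ W.v f := hsmall b (le_refl b)
  have h1 : W.v (ι b + f) = W.v f := by
    rw [map_add, (le_iff _ _).mp hle]
  have h2 : W'.v (ι b + f) = W'.v f := (W'.ker _ _).mp (hPQ _ _ ((W.ker _ _).mpr h1))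
  rw [map_add, h, add_zero] at h2
  exact hom_ne_zero (W'.v.comp ι) hb (by rwa [RingHom.comp_apply])

/-- The key inequality: any point of `Cont A` above `P` collapses only ratios that are
infinitesimal relative to `c = v (ι t)`. -/
theorem cont_key (hι : @Continuous S A (canonicalTopology S) tA ι)
    (W : ContWitness tA P) (W' : ContWitness tA Q)
    (hPQ : ∀ f g : A, P f g → Q f g) {t : S} (ht0 : t ≠ 0) (ht1 : t < 1)
    (f g : A) (hw : letI := W'.instK; W'.v f = W'.v g)
    (hf : letI := W.instK; W.v f ≠ 0) (hg : letI := W.instK; W.v g ≠ 0) (n : ℕ) :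
    letI := W.instK; W.v (ι t) * (W.v f) ^ n < (W.v g) ^ n := by
  letI := W.instK
  letI := W'.instK
  have hτ : @Continuous S W'.K (canonicalTopology S) (canonicalTopology W'.K)
      ⇑(W'.v.comp ι) := by
    rw [RingHom.coe_comp]
    exact @Continuous.comp S A W'.K (canonicalTopology S) tA (canonicalTopology W'.K) _ _ W'.cont hι
  by_contra hcon
  push_neg at hcon
  have hle : W.v (g ^ n) ≤ W.v (ι t * f ^ n) := by
    rw [map_pow, map_mul, map_pow]; exact hcon
  have h2 : W'.v (g ^ n) ≤ W'.v (ι t * f ^ n) := cont_mono W W' hPQ _ _ hle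
  rw [map_pow, map_mul, map_pow] at h2
  have hwg : W'.v g ≠ 0 := fun h0 => hg (cont_supp hι W W' hPQ g h0)
  have hX : (W'.v g) ^ n ≠ 0 := pow_ne_zero' hwg n
  rw [hw] at h2
  have h3 : (W'.v g) ^ n * 1 ≤ (W'.v g) ^ n * W'.v (ι t) := by
    rw [mul_one, mul_comm]; exact h2
  have h4 : (1 : W'.K) ≤ W'.v (ι t) := le_of_mul_le_left hX h3
  have h5 : W'.v (ι t) < 1 := by
    have := hom_lt_one (W'.v.comp ι) hτ ht0 ht1
    rwa [RingHom.comp_apply] at this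
  exact absurd (lt_of_le_of_lt h4 h5) (lt_irrefl 1)

end MAIN

end MaxCont
theorem exists_unique_maximal_inCont_above {S A : Type u} [TropSub S] [CommSemiring A]
    (tA : TopologicalSpace A) (hadd : @ContinuousAdd A tA _) (hmul : @ContinuousMul A tA _)
    (ι : S →+* A) (hι : @Continuous S A (canonicalTopology S) tA ι)
    (P : RingCon A) (hP : InCont tA P) :
    ∃! P' : RingCon A,
      InCont tA P' ∧ (∀ f g : A, P f g → P' f g) ∧
        ∀ Q : RingCon A, InCont tA Q → (∀ f g : A, P' f g → Q f g) → Q = P' := by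
  classical
  obtain ⟨W⟩ := hP
  letI instK : IdemTOSemifield W.K := W.instK
  obtain ⟨t, ht0, ht1⟩ := MaxCont.exists_lt_one (M := S)
  have hσ : @Continuous S W.K (canonicalTopology S) (canonicalTopology W.K) ⇑(W.v.comp ι) := by
    rw [RingHom.coe_comp]
    exact @Continuous.comp S A W.K (canonicalTopology S) tA (canonicalTopology W.K) _ _
      W.cont hι
  have hc0 : W.v (ι t) ≠ 0 := by
    have := MaxCont.hom_ne_zero (W.v.comp ι) ht0
    rwa [RingHom.comp_apply] at this
  have hc1 : W.v (ι t) < 1 := by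
    have := MaxCont.hom_lt_one (W.v.comp ι) hσ ht0 ht1
    rwa [RingHom.comp_apply] at this
  set P' : RingCon A := MaxCont.pullCon (MaxCont.kcon hc0 hc1) W.v with hP'def
  have hP'iff : ∀ f g : A, P' f g ↔ MaxCont.krel (W.v (ι t)) (W.v f) (W.v g) :=
    fun f g => Iff.rfl
  have hInP' : InCont tA P' := ⟨MaxCont.maxWitness tA W.v W.cont hc0 hc1 ⟨ι t, rfl⟩⟩
  have hPP' : ∀ f g : A, P f g → P' f g := by
    intro f g h
    have he : W.v f = W.v g := (W.ker f g).mp h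
    rw [hP'iff, he]
    exact MaxCont.krel_refl hc0 hc1 _
  have hmem : ∀ Q : RingCon A, InCont tA Q → (∀ f g : A, P f g → Q f g) →
      ∀ f g : A, Q f g → P' f g := by
    rintro Q ⟨W'⟩ hPQ f g hfg
    letI := W'.instK
    have hw : W'.v f = W'.v g := (W'.ker f g).mp hfg
    rw [hP'iff]
    by_cases hf : W.v f = 0
    · left
      refine ⟨hf, ?_⟩
      have h1 : W'.v f = 0 := by
        have he : W.v f = W.v 0 := by rw [map_zero]; exact hf
        have h2 := (W'.ker f 0).mp (hPQ _ _ ((W.ker f 0).mpr he))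
        rwa [map_zero] at h2
      exact MaxCont.cont_supp hι W W' hPQ g (by rw [← hw]; exact h1)
    · have hg : W.v g ≠ 0 := by
        intro hg0
        apply hf
        have h1 : W'.v g = 0 := by
          have he : W.v g = W.v 0 := by rw [map_zero]; exact hg0
          have h2 := (W'.ker g 0).mp (hPQ _ _ ((W.ker g 0).mpr he))
          rwa [map_zero] at h2
        exact MaxCont.cont_supp hι W W' hPQ f (by rw [hw]; exact h1)
      right
      exact ⟨hf, hg, fun n =>
        ⟨MaxCont.cont_key hι W W' hPQ ht0 ht1 f g hw hf hg n,
          MaxCont.cont_key hι W W' hPQ ht0 ht1 g f hw.symm hg hf n⟩⟩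
  refine ⟨P', ⟨hInP', hPP', ?_⟩, ?_⟩
  · intro Q hQ hle
    exact RingCon.ext fun f g =>
      ⟨fun h => hmem Q hQ (fun a b hab => hle a b (hPP' a b hab)) f g h, hle f g⟩
  · rintro P'' ⟨hInP'', hPP'', hmax''⟩
    exact (hmax'' P' hInP' (hmem P'' hInP'' hPP'')).symm
end

section
/- Let S be a sub-semifield of 𝕋 (with S ≠ 𝔹), let A and B be S-algebras with B a topological S-algebra, let φ : A → B be a homomorphism of S-algebras, and let P be a prime congruence on A. Assume: (a) the topological closure P̄ of (φ × φ)(P) in B × B (with the product topology) is a prime congruence on B; (b) the pullback (φ × φ)^{-1}(P̄) equals P; and (c) the induced semiring homomorphism A/P → B/P̄ is bijective. Then P̄ is the unique prime congruence Q on B which is closed as a subset of B × B and satisfies (φ × φ)^{-1}(Q) = P. -/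
/-!
Statement 15: if the topological closure `P̄` of `(φ × φ)(P)` in `B × B` is a prime congruence
whose pullback along `φ` is `P`, and the induced map `A/P → B/P̄` is bijective, then `P̄` is the
unique closed prime congruence on `B` pulling back to `P`.
-/

theorem closure_unique_closed_prime_pullback {S A B : Type*} [TropSub S]
    [CommSemiring A] [CommSemiring B]
    [tB : TopologicalSpace B] [ContinuousAdd B] [ContinuousMul B]
    (ιA : S →+* A) (ιB : S →+* B)
    (hιB : @Continuous S B (canonicalTopology S) tB ιB)
    (φ : A →+* B) (hcomm : ∀ s : S, φ (ιA s) = ιB s)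
    (P : RingCon A) (hPprime : IsPrimeCon P)
    (Pbar : RingCon B) (hPbarPrime : IsPrimeCon Pbar)
    (hPbarClosure : ∀ x y : B, Pbar x y ↔
      (x, y) ∈ closure {q : B × B | ∃ p : A × A, P p.1 p.2 ∧ q = (φ p.1, φ p.2)})
    (hpullback : ∀ f g : A, P f g ↔ Pbar (φ f) (φ g))
    (hsurj : ∀ y : B, ∃ x : A, Pbar (φ x) y) :
    ∀ Q : RingCon B, IsPrimeCon Q → IsClosed {q : B × B | Q q.1 q.2} →
      (∀ f g : A, P f g ↔ Q (φ f) (φ g)) → Q = Pbar := by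
  intro Q hQ hQclosed hQpull
  have hPbarQ : ∀ x y : B, Pbar x y → Q x y := by
    intro x y hxy
    have hsub : {q : B × B | ∃ p : A × A, P p.1 p.2 ∧ q = (φ p.1, φ p.2)} ⊆
        {q : B × B | Q q.1 q.2} := by
      rintro ⟨u, v⟩ ⟨⟨a, b⟩, hab, heq⟩
      have := (hQpull a b).mp hab
      simp only [Prod.mk.injEq] at heq
      simpa [heq.1, heq.2] using this
    have := closure_minimal hsub hQclosed ((hPbarClosure x y).mp hxy)
    exact this
  refine le_antisymm (fun {x y} hxy => ?_) (fun {x y} => hPbarQ x y)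
  · 
    obtain ⟨a, ha⟩ := hsurj x
    obtain ⟨b, hb⟩ := hsurj y
    have hQa : Q (φ a) x := hPbarQ _ _ ha
    have hQb : Q (φ b) y := hPbarQ _ _ hb
    have : Q (φ a) (φ b) := Q.trans (Q.trans hQa hxy) (Q.symm hQb)
    have hP : P a b := (hQpull a b).mpr this
    have : Pbar (φ a) (φ b) := (hpullback a b).mp hP
    exact Pbar.trans (Pbar.trans (Pbar.symm ha) this) hb
end
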